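/- arXiv:1812.06965 — 3 statements merged into one kernel-verified Lean document; each statement's English description precedes it below -/
import Mathlib

section
/- If R₀ > 1, then the Jacobian matrix J of system (1) at the disease-free equilibrium E_f = (Λ/μ, 0, 0, 0), namely J = [[−μ, −f(S₀,0), 0, 0], [0, f(S₀,0) − ξ1, ω, α], [0, φ, −ξ2, 0], [0, ρ, 0, −ξ3]] with S₀ = Λ/μ, has a real eigenvalue λ > 0; consequently E_f is unstable. -/
/-- if `R₀ > 1` then the Jacobian at the disease-free
equilibrium has a positive real eigenvalue, so `E_f` is unstable. -/
theorem disease_free_unstable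
    (Λ μ ρ φ α ω d : ℝ)
    (hΛ : 0 < Λ) (hμ : 0 < μ) (hρ : 0 < ρ) (hφ : 0 < φ)
    (hα : 0 < α) (hω : 0 < ω) (hd : 0 < d)
    (f : ℝ → ℝ → ℝ)
    (hfpos : 0 < f (Λ / μ) 0)
    (ξ1 ξ2 ξ3 D R₀ S₀ : ℝ)
    (hξ1 : ξ1 = ρ + φ + μ) (hξ2 : ξ2 = ω + μ) (hξ3 : ξ3 = α + μ + d)
    (hD : D = μ * (ξ2 * (ξ3 + ρ) + φ * ξ3 + ρ * d) + ρ * ω * d)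
    (hS₀ : S₀ = Λ / μ)
    (hR₀ : R₀ = f (Λ / μ) 0 * ξ2 * ξ3 / D)
    (hR₀gt : 1 < R₀)
    (J : Matrix (Fin 4) (Fin 4) ℝ)
    (hJ : J = !![-μ, -(f S₀ 0), 0, 0;
                 0, f S₀ 0 - ξ1, ω, α;
                 0, φ, -ξ2, 0;
                 0, ρ, 0, -ξ3]) :
    ∃ lam : ℝ, 0 < lam ∧ ∃ v : Fin 4 → ℝ, v ≠ 0 ∧ J.mulVec v = lam • v := by
  set F := f S₀ 0 with hF
  have hFpos : 0 < F := by rw [hF, hS₀]; exact hfpos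
  -- characteristic-type function
  set g : ℝ → ℝ := fun l =>
    (l + μ) * ((l + ξ1 - F) * (l + ξ2) * (l + ξ3) - ω * φ * (l + ξ3) - α * ρ * (l + ξ2))
    with hg
  have hdet : ∀ l : ℝ, (J - l • 1).det = g l := by
    intro l
    rw [hJ]
    simp (config := { decide := true }) [Matrix.det_succ_row_zero, Fin.sum_univ_succ,
      Matrix.sub_apply, Matrix.smul_apply, Matrix.one_apply, hg]
    ring
  have hDpos : 0 < D := by
    rw [hD, hξ2, hξ3]; positivity
  have hFgtD : D < F * ξ2 * ξ3 := by
    have := (lt_div_iff₀ hDpos).mp (by rw [← hR₀]; exact hR₀gt : 1 < f (Λ / μ) 0 * ξ2 * ξ3 / D)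
    rw [hF, hS₀]; linarith
  have hg0 : g 0 < 0 := by
    have key : g 0 = μ * (D - F * ξ2 * ξ3) := by
      rw [hg]; simp only; rw [hD, hξ1, hξ2, hξ3]; ring
    rw [key]
    have : D - F * ξ2 * ξ3 < 0 := by linarith
    exact mul_neg_of_pos_of_neg hμ this
  set L : ℝ := F + ω * φ + α * ρ + 1 with hL
  have hLpos : 0 < L := by positivity
  have hgL : 0 < g L := by
    have hξ2pos : 0 < ξ2 := by rw [hξ2]; positivity
    have hξ3pos : 0 < ξ3 := by rw [hξ3]; positivity
    have hξ1pos : 0 < ξ1 := by rw [hξ1]; positivity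
    have h1 : L + ξ1 - F = ω * φ + α * ρ + 1 + ξ1 := by rw [hL]; ring
    have hB0 : (0:ℝ) < L + ξ2 := by linarith
    have hC0 : (0:ℝ) < L + ξ3 := by linarith
    have hB1 : (1:ℝ) ≤ L + ξ2 := by rw [hL]; nlinarith
    have hC1 : (1:ℝ) ≤ L + ξ3 := by rw [hL]; nlinarith
    have main : 0 < (L + ξ1 - F) * (L + ξ2) * (L + ξ3)
        - ω * φ * (L + ξ3) - α * ρ * (L + ξ2) := by
      rw [h1]
      nlinarith [mul_nonneg (mul_nonneg (mul_pos hω hφ).le hC0.le) (by linarith : (0:ℝ) ≤ L + ξ2 - 1),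
        mul_nonneg (mul_nonneg (mul_pos hα hρ).le hB0.le) (by linarith : (0:ℝ) ≤ L + ξ3 - 1),
        mul_pos hB0 hC0,
        mul_nonneg (mul_nonneg hξ1pos.le hB0.le) hC0.le]
    rw [hg]
    exact mul_pos (by linarith) main
  -- IVT
  have hcont : ContinuousOn g (Set.Icc 0 L) := by
    apply Continuous.continuousOn; rw [hg]; fun_prop
  have h0L : (0:ℝ) ≤ L := le_of_lt hLpos
  have hsub := intermediate_value_Ioo h0L hcont
  have hmem : (0:ℝ) ∈ Set.Ioo (g 0) (g L) := ⟨hg0, hgL⟩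
  obtain ⟨lam, hlam, hglam⟩ := hsub hmem
  refine ⟨lam, hlam.1, ?_⟩
  have hdet0 : (J - lam • 1).det = 0 := by rw [hdet]; exact hglam
  obtain ⟨v, hv, hmv⟩ := (Matrix.exists_mulVec_eq_zero_iff).mpr hdet0
  refine ⟨v, hv, ?_⟩
  rwa [Matrix.sub_mulVec, sub_eq_zero, Matrix.smul_mulVec, Matrix.one_mulVec] at hmv
end

section
/- Let (S*, I*, C*, A*) with S*, I*, C*, A* > 0 be an endemic equilibrium, i.e., Λ = μS* + f(S*,I*)I*, ξ1 I* = f(S*,I*)I* + ωC* + αA*, φI* = ξ2 C*, ρI* = ξ3 A*. Assume f satisfies (H2), (H3) and additionally (H4): (1 − f(S,I)/f(S,I*))·(f(S,I*)/f(S,I) − I/I*) ≤ 0 for all S, I > 0. Let S, I, C, A : [0,∞) → (0,∞) be a differentiable positive solution of system (1) and define V₂(t) = S − S* − ∫_{S*}^{S} f(S*,I*)/f(X,I*) dX + I − I* − I*·ln(I/I*) + (ω/ξ2)(C − C* − C*·ln(C/C*)) + (α/ξ3)(A − A* − A*·ln(A/A*)). Then dV₂/dt ≤ 0 for all t ≥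 0. -/
lemma aux_two_cycle {x y : ℝ} (hx : 0 < x) (hy : 0 < y) : 2 ≤ x / y + y / x := by
  rw [div_add_div _ _ hy.ne' hx.ne', le_div_iff₀ (by positivity)]
  nlinarith [sq_nonneg (x - y)]

lemma aux_three_cycle {x y z : ℝ} (hx : 0 < x) (hy : 0 < y) (hz : 0 < z)
    (h : x * y * z = 1) : 3 ≤ x + y + z := by
  nlinarith [sq_nonneg (x - y), sq_nonneg (y - z), sq_nonneg (x - z),
    mul_pos hx hy, mul_pos hy hz, mul_pos hx hz,
    mul_nonneg (mul_nonneg hx.le hx.le) hy.le, sq_nonneg (x + y + z - 3)]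

lemma aux_mul_nonpos {a b : ℝ} (ha : 0 ≤ a) (hb : b ≤ 0) : a * b ≤ 0 :=
  mul_nonpos_iff.mpr (Or.inl ⟨ha, hb⟩)

lemma aux_hasDerivAt_of_eq {f : ℝ → ℝ} {v w t : ℝ} (h : HasDerivAt f w t) (hvw : v = w) :
    HasDerivAt f v t := hvw ▸ h

set_option maxHeartbeats 2000000 in
/-- under (H2), (H3) and (H4), the Lyapunov functional `V₂` is
nonincreasing along positive solutions of system (1): at every `t ≥ 0` it has
a derivative `≤ 0`. -/
theorem lyapunov_V2_nonincreasing
    (Λ μ ρ φ α ω d : ℝ)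
    (hΛ : 0 < Λ) (hμ : 0 < μ) (hρ : 0 < ρ) (hφ : 0 < φ)
    (hα : 0 < α) (hω : 0 < ω) (hd : 0 < d)
    (ξ1 ξ2 ξ3 : ℝ)
    (hξ1 : ξ1 = ρ + φ + μ) (hξ2 : ξ2 = ω + μ) (hξ3 : ξ3 = α + μ + d)
    (f : ℝ → ℝ → ℝ)
    (hf_nonneg : ∀ S I : ℝ, 0 ≤ S → 0 ≤ I → 0 ≤ f S I)
    (hf_C1 : ContDiffOn ℝ 1 (fun p : ℝ × ℝ => f p.1 p.2)
      (interior {p : ℝ × ℝ | 0 ≤ p.1 ∧ 0 ≤ p.2}))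
    (hf_pos : ∀ S I : ℝ, 0 < S → 0 ≤ I → 0 < f S I)
    (hH2 : ∀ S I : ℝ, 0 < S → 0 ≤ I → 0 < deriv (fun s => f s I) S)
    (hH3 : ∀ S I : ℝ, 0 ≤ S → 0 ≤ I → deriv (fun i => f S i) I ≤ 0)
    (Sstar Istar Cstar Astar : ℝ)
    (hSstar : 0 < Sstar) (hIstar : 0 < Istar)
    (hCstar : 0 < Cstar) (hAstar : 0 < Astar)
    (heq1 : Λ = μ * Sstar + f Sstar Istar * Istar)
    (heq2 : ξ1 * Istar = f Sstar Istar * Istar + ω * Cstar + α * Astar)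
    (heq3 : φ * Istar = ξ2 * Cstar)
    (heq4 : ρ * Istar = ξ3 * Astar)
    (hH4 : ∀ S I : ℝ, 0 < S → 0 < I →
      (1 - f S I / f S Istar) * (f S Istar / f S I - I / Istar) ≤ 0)
    (S I C A : ℝ → ℝ)
    (hpos : ∀ t : ℝ, 0 ≤ t → 0 < S t ∧ 0 < I t ∧ 0 < C t ∧ 0 < A t)
    (hS : ∀ t : ℝ, 0 ≤ t →
      HasDerivAt S (Λ - μ * S t - f (S t) (I t) * I t) t)
    (hI : ∀ t : ℝ, 0 ≤ t →
      HasDerivAt I (f (S t) (I t) * I t - ξ1 * I t + α * A t + ω * C t) t)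
    (hC : ∀ t : ℝ, 0 ≤ t →
      HasDerivAt C (φ * I t - ξ2 * C t) t)
    (hA : ∀ t : ℝ, 0 ≤ t →
      HasDerivAt A (ρ * I t - ξ3 * A t) t)
    (V₂ : ℝ → ℝ)
    (hV₂ : ∀ t : ℝ, V₂ t =
      S t - Sstar - (∫ X in Sstar..S t, f Sstar Istar / f X Istar)
        + I t - Istar - Istar * Real.log (I t / Istar)
        + (ω / ξ2) * (C t - Cstar - Cstar * Real.log (C t / Cstar))
        + (α / ξ3) * (A t - Astar - Astar * Real.log (A t / Astar))) :
    ∀ t : ℝ, 0 ≤ t → ∃ v : ℝ, v ≤ 0 ∧ HasDerivAt V₂ v t := by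
  -- basic positivity facts
  have hξ2pos : 0 < ξ2 := by rw [hξ2]; linarith
  have hξ3pos : 0 < ξ3 := by rw [hξ3]; linarith
  have hF : 0 < f Sstar Istar := hf_pos _ _ hSstar hIstar.le
  have hCs : Cstar = φ * Istar / ξ2 := by rw [eq_div_iff hξ2pos.ne']; linarith
  have hAs : Astar = ρ * Istar / ξ3 := by rw [eq_div_iff hξ3pos.ne']; linarith
  have hx1 : ξ1 = f Sstar Istar + ω * φ / ξ2 + α * ρ / ξ3 := by
    have h2 : ξ1 * Istar = (f Sstar Istar + ω * φ / ξ2 + α * ρ / ξ3) * Istar := by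
      rw [heq2, hCs, hAs]; field_simp
    exact mul_right_cancel₀ hIstar.ne' h2
  -- continuity of the slice X ↦ f X Istar on (0, ∞)
  have hUeq : interior {p : ℝ × ℝ | 0 ≤ p.1 ∧ 0 ≤ p.2}
      = Set.Ioi (0:ℝ) ×ˢ Set.Ioi (0:ℝ) := by
    have h : {p : ℝ × ℝ | 0 ≤ p.1 ∧ 0 ≤ p.2} = Set.Ici (0:ℝ) ×ˢ Set.Ici (0:ℝ) := by
      ext ⟨a, b⟩; simp [Set.mem_Ici, Prod.le_def]
    rw [h, interior_prod_eq, interior_Ici]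
  have hfC : ContinuousOn (fun p : ℝ × ℝ => f p.1 p.2) (Set.Ioi (0:ℝ) ×ˢ Set.Ioi (0:ℝ)) := by
    have := hf_C1.continuousOn; rwa [hUeq] at this
  have hslice : ContinuousOn (fun X => f X Istar) (Set.Ioi (0:ℝ)) := by
    have hmap : Set.MapsTo (fun X : ℝ => (X, Istar)) (Set.Ioi 0)
        (Set.Ioi (0:ℝ) ×ˢ Set.Ioi (0:ℝ)) := fun x hx => ⟨hx, hIstar⟩
    exact hfC.comp ((continuous_id.prodMk continuous_const).continuousOn) hmap
  have hinteg : ContinuousOn (fun X => f Sstar Istar / f X Istar) (Set.Ioi (0:ℝ)) :=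
    continuousOn_const.div hslice (fun x hx => (hf_pos x Istar hx hIstar.le).ne')
  -- strict monotonicity in S from (H2)
  have hmono : StrictMonoOn (fun x => f x Istar) (Set.Ioi (0:ℝ)) :=
    strictMonoOn_of_deriv_pos (convex_Ioi 0) hslice
      (by rw [interior_Ioi]; exact fun x hx => hH2 x Istar hx hIstar.le)
  intro t ht
  obtain ⟨hSt, hIt, hCt, hAt⟩ := hpos t ht
  have hp : 0 < f (S t) Istar := hf_pos _ _ hSt hIstar.le
  have hq : 0 < f (S t) (I t) := hf_pos _ _ hSt hIt.le
  refine ⟨(Λ - μ * S t - f (S t) (I t) * I t) * (1 - f Sstar Istar / f (S t) Istar)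
      + (f (S t) (I t) * I t - ξ1 * I t + α * A t + ω * C t) * (1 - Istar / I t)
      + ω / ξ2 * ((φ * I t - ξ2 * C t) * (1 - Cstar / C t))
      + α / ξ3 * ((ρ * I t - ξ3 * A t) * (1 - Astar / A t)), ?_, ?_⟩
  · -- the derivative is nonpositive
    have hsign : (Sstar - S t) * (f (S t) Istar - f Sstar Istar) ≤ 0 := by
      rcases lt_trichotomy (S t) Sstar with h | h | h
      · have := hmono (Set.mem_Ioi.mpr hSt) (Set.mem_Ioi.mpr hSstar) h
        nlinarith
      · rw [h]
        have hz : (Sstar - Sstar) * (f Sstar Istar - f Sstar Istar) = 0 := by ring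
        linarith
      · have := hmono (Set.mem_Ioi.mpr hSstar) (Set.mem_Ioi.mpr hSt) h
        nlinarith
    have b1 : μ * ((Sstar - S t) * (1 - f Sstar Istar / f (S t) Istar)) ≤ 0 := by
      have he : μ * ((Sstar - S t) * (1 - f Sstar Istar / f (S t) Istar))
          = (μ / f (S t) Istar) * ((Sstar - S t) * (f (S t) Istar - f Sstar Istar)) := by
        field_simp
        try ring
      rw [he]; exact aux_mul_nonpos (by positivity) hsign
    have b2 : f Sstar Istar * Istar * ((1 - f (S t) (I t) / f (S t) Istar)
        * (f (S t) Istar / f (S t) (I t) - I t / Istar)) ≤ 0 :=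
      aux_mul_nonpos (by positivity) (hH4 (S t) (I t) hSt hIt)
    have b3 : f Sstar Istar * Istar * (3 - f Sstar Istar / f (S t) Istar
        - f (S t) Istar / f (S t) (I t) - f (S t) (I t) / f Sstar Istar) ≤ 0 := by
      have h3 := aux_three_cycle (x := f Sstar Istar / f (S t) Istar)
        (y := f (S t) Istar / f (S t) (I t)) (z := f (S t) (I t) / f Sstar Istar)
        (by positivity) (by positivity) (by positivity) (by field_simp)
      exact aux_mul_nonpos (by positivity) (by linarith)
    have b4 : ω * Cstar * (2 - C t * Istar / (Cstar * I t) - Cstar * I t / (C t * Istar)) ≤ 0 := by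
      have h4 := aux_two_cycle (x := C t * Istar) (y := Cstar * I t)
        (by positivity) (by positivity)
      exact aux_mul_nonpos (by positivity) (by linarith)
    have b5 : α * Astar * (2 - A t * Istar / (Astar * I t) - Astar * I t / (A t * Istar)) ≤ 0 := by
      have h5 := aux_two_cycle (x := A t * Istar) (y := Astar * I t)
        (by positivity) (by positivity)
      exact aux_mul_nonpos (by positivity) (by linarith)
    have hDE : (Λ - μ * S t - f (S t) (I t) * I t) * (1 - f Sstar Istar / f (S t) Istar)
        + (f (S t) (I t) * I t - ξ1 * I t + α * A t + ω * C t) * (1 - Istar / I t)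
        + ω / ξ2 * ((φ * I t - ξ2 * C t) * (1 - Cstar / C t))
        + α / ξ3 * ((ρ * I t - ξ3 * A t) * (1 - Astar / A t))
        = μ * ((Sstar - S t) * (1 - f Sstar Istar / f (S t) Istar))
        + f Sstar Istar * Istar * ((1 - f (S t) (I t) / f (S t) Istar)
            * (f (S t) Istar / f (S t) (I t) - I t / Istar))
        + f Sstar Istar * Istar * (3 - f Sstar Istar / f (S t) Istar
            - f (S t) Istar / f (S t) (I t) - f (S t) (I t) / f Sstar Istar)
        + ω * Cstar * (2 - C t * Istar / (Cstar * I t) - Cstar * I t / (C t * Istar))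
        + α * Astar * (2 - A t * Istar / (Astar * I t) - Astar * I t / (A t * Istar)) := by
      rw [heq1, hx1, hCs, hAs]
      field_simp
      ring
    rw [hDE]
    linarith
  · -- it is indeed the derivative of V₂
    have hVfun : V₂ = fun τ => S τ - Sstar - (∫ X in Sstar..S τ, f Sstar Istar / f X Istar)
        + I τ - Istar - Istar * Real.log (I τ / Istar)
        + (ω / ξ2) * (C τ - Cstar - Cstar * Real.log (C τ / Cstar))
        + (α / ξ3) * (A τ - Astar - Astar * Real.log (A τ / Astar)) := funext hV₂
    rw [hVfun]
    have hsub : Set.uIcc Sstar (S t) ⊆ Set.Ioi (0:ℝ) := by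
      intro x hx
      rcases Set.mem_uIcc.mp hx with ⟨h1, _⟩ | ⟨h1, _⟩
      · exact lt_of_lt_of_le hSstar h1
      · exact lt_of_lt_of_le hSt h1
    have hInt : IntervalIntegrable (fun X => f Sstar Istar / f X Istar)
        MeasureTheory.volume Sstar (S t) := (hinteg.mono hsub).intervalIntegrable
    have hMeas : StronglyMeasurableAtFilter (fun X => f Sstar Istar / f X Istar)
        (nhds (S t)) MeasureTheory.volume :=
      hinteg.stronglyMeasurableAtFilter isOpen_Ioi (S t) (Set.mem_Ioi.mpr hSt)
    have hContAt : ContinuousAt (fun X => f Sstar Istar / f X Istar) (S t) :=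
      hinteg.continuousAt (isOpen_Ioi.mem_nhds (Set.mem_Ioi.mpr hSt))
    have hFTC := intervalIntegral.integral_hasDerivAt_right hInt hMeas hContAt
    have hcomp := hFTC.comp t (hS t ht)
    have hlogI : HasDerivAt (fun τ => Real.log (I τ / Istar))
        ((f (S t) (I t) * I t - ξ1 * I t + α * A t + ω * C t) / Istar / (I t / Istar)) t :=
      ((hI t ht).div_const Istar).log (by positivity)
    have hlogC : HasDerivAt (fun τ => Real.log (C τ / Cstar))
        ((φ * I t - ξ2 * C t) / Cstar / (C t / Cstar)) t :=
      ((hC t ht).div_const Cstar).log (by positivity)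
    have hlogA : HasDerivAt (fun τ => Real.log (A τ / Astar))
        ((ρ * I t - ξ3 * A t) / Astar / (A t / Astar)) t :=
      ((hA t ht).div_const Astar).log (by positivity)
    have hBig := (((((((hS t ht).sub_const Sstar).sub hcomp).add (hI t ht)).sub_const
        Istar).sub (hlogI.const_mul Istar)).add
        ((((hC t ht).sub_const Cstar).sub (hlogC.const_mul Cstar)).const_mul (ω / ξ2))).add
        ((((hA t ht).sub_const Astar).sub (hlogA.const_mul Astar)).const_mul (α / ξ3))
    refine aux_hasDerivAt_of_eq hBig ?_
    field_simp
    ring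
end

section
/- Define R₀ as a function of the parameter α by R₀(α) = f₀·ξ2·ξ3(α) / D(α), where ξ3(α) = α+μ+d, D(α) = μ[ξ2(ξ3(α)+ρ) + φξ3(α) + ρd] + ρωd and f₀ > 0 is a constant. Then the normalized forward sensitivity index of R₀ with respect to α, namely (dR₀/dα)·(α/R₀(α)), equals ρα(μ+d)ξ2 / (D(α)·ξ3(α)). Similarly, defining R₀ as a function of ω by R₀(ω) = f₀·ξ2(ω)·ξ3 / D(ω) with ξ2(ω) = ω+μ and D(ω) = μ[ξ2(ω)(ξ3+ρ) + φξ3 + ρd] + ρωd, the sensitivity index (dR₀/dω)·(ω/R₀(ω)) equals μωφξ3 / (D(ω)·ξ2(ω)). -/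
set_option maxHeartbeats 1000000 in
/-- the normalized forward sensitivity indices of `R₀` with
respect to `α` and `ω` equal `ρα(μ+d)ξ2/(𝒟ξ3)` and `μωφξ3/(𝒟ξ2)`. -/
theorem sensitivity_index_alpha_omega
    (μ ρ φ α ω d f₀ : ℝ)
    (hμ : 0 < μ) (hρ : 0 < ρ) (hφ : 0 < φ)
    (hα : 0 < α) (hω : 0 < ω) (hd : 0 < d) (hf₀ : 0 < f₀)
    (ξ2 ξ3 : ℝ) (hξ2 : ξ2 = ω + μ) (hξ3 : ξ3 = α + μ + d)
    (ξ3fun Dαfun R₀α : ℝ → ℝ)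
    (hξ3fun : ∀ a : ℝ, ξ3fun a = a + μ + d)
    (hDαfun : ∀ a : ℝ,
      Dαfun a = μ * (ξ2 * (ξ3fun a + ρ) + φ * ξ3fun a + ρ * d) + ρ * ω * d)
    (hR₀α : ∀ a : ℝ, R₀α a = f₀ * ξ2 * ξ3fun a / Dαfun a)
    (ξ2fun Dωfun R₀ω : ℝ → ℝ)
    (hξ2fun : ∀ w : ℝ, ξ2fun w = w + μ)
    (hDωfun : ∀ w : ℝ,
      Dωfun w = μ * (ξ2fun w * (ξ3 + ρ) + φ * ξ3 + ρ * d) + ρ * w * d)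
    (hR₀ω : ∀ w : ℝ, R₀ω w = f₀ * ξ2fun w * ξ3 / Dωfun w) :
    deriv R₀α α * (α / R₀α α) = ρ * α * (μ + d) * ξ2 / (Dαfun α * ξ3fun α) ∧
    deriv R₀ω ω * (ω / R₀ω ω) = μ * ω * φ * ξ3 / (Dωfun ω * ξ2fun ω) := by
  subst hξ2; subst hξ3
  have hξ2pos : (0:ℝ) < ω + μ := by positivity
  constructor
  · -- α part
    set C : ℝ := μ * ((ω + μ) * ((μ + d) + ρ) + φ * (μ + d) + ρ * d) + ρ * ω * d
      with hC
    have hDlin : ∀ a, Dαfun a = μ * ((ω + μ) + φ) * a + C := by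
      intro a; rw [hDαfun, hξ3fun, hC]; ring
    have hDpos : 0 < Dαfun α := by rw [hDαfun, hξ3fun]; positivity
    have hden : μ * ((ω + μ) + φ) * α + C ≠ 0 := by
      rw [← hDlin]; exact hDpos.ne'
    have hfun : R₀α = fun a =>
        (f₀ * (ω + μ) * a + f₀ * (ω + μ) * (μ + d))
          / (μ * ((ω + μ) + φ) * a + C) := by
      funext a
      rw [hR₀α, hξ3fun, hDlin]; ring_nf
    have hN : HasDerivAt
        (fun a : ℝ => f₀ * (ω + μ) * a + f₀ * (ω + μ) * (μ + d))
        (f₀ * (ω + μ)) α := by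
      simpa using ((hasDerivAt_id α).const_mul (f₀ * (ω + μ))).add_const
        (f₀ * (ω + μ) * (μ + d))
    have hD : HasDerivAt (fun a : ℝ => μ * ((ω + μ) + φ) * a + C)
        (μ * ((ω + μ) + φ)) α := by
      simpa using ((hasDerivAt_id α).const_mul (μ * ((ω + μ) + φ))).add_const C
    have hnum : f₀ * (ω + μ) * (μ * ((ω + μ) + φ) * α + C)
        - (f₀ * (ω + μ) * α + f₀ * (ω + μ) * (μ + d)) * (μ * ((ω + μ) + φ))
        = f₀ * (ω + μ) * (ρ * (μ + d) * (ω + μ)) := by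
      rw [hC]; ring
    have hder : deriv R₀α α
        = f₀ * (ω + μ) * (ρ * (μ + d) * (ω + μ)) / (Dαfun α) ^ 2 := by
      rw [hfun]
      refine ((hN.div hD hden).deriv).trans ?_
      rw [hnum, ← hDlin]
    have hξ3α : ξ3fun α ≠ 0 := by rw [hξ3fun]; positivity
    rw [hder, hR₀α]
    field_simp
  · -- ω part
    set C : ℝ := μ * (μ * ((α + μ + d) + ρ) + φ * (α + μ + d) + ρ * d) with hC
    have hDlin : ∀ w, Dωfun w = (μ * ((α + μ + d) + ρ) + ρ * d) * w + C := by
      intro w; rw [hDωfun, hξ2fun, hC]; ring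
    have hDpos : 0 < Dωfun ω := by rw [hDωfun, hξ2fun]; positivity
    have hden : (μ * ((α + μ + d) + ρ) + ρ * d) * ω + C ≠ 0 := by
      rw [← hDlin]; exact hDpos.ne'
    have hfun : R₀ω = fun w =>
        (f₀ * (α + μ + d) * w + f₀ * (α + μ + d) * μ)
          / ((μ * ((α + μ + d) + ρ) + ρ * d) * w + C) := by
      funext w
      rw [hR₀ω, hξ2fun, hDlin]; ring_nf
    have hN : HasDerivAt
        (fun w : ℝ => f₀ * (α + μ + d) * w + f₀ * (α + μ + d) * μ)
        (f₀ * (α + μ + d)) ω := by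
      simpa using ((hasDerivAt_id ω).const_mul (f₀ * (α + μ + d))).add_const
        (f₀ * (α + μ + d) * μ)
    have hD : HasDerivAt
        (fun w : ℝ => (μ * ((α + μ + d) + ρ) + ρ * d) * w + C)
        (μ * ((α + μ + d) + ρ) + ρ * d) ω := by
      simpa using ((hasDerivAt_id ω).const_mul
        (μ * ((α + μ + d) + ρ) + ρ * d)).add_const C
    have hnum : f₀ * (α + μ + d) * ((μ * ((α + μ + d) + ρ) + ρ * d) * ω + C)
        - (f₀ * (α + μ + d) * ω + f₀ * (α + μ + d) * μ)
          * (μ * ((α + μ + d) + ρ) + ρ * d)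
        = f₀ * (α + μ + d) * (μ * φ * (α + μ + d)) := by
      rw [hC]; ring
    have hder : deriv R₀ω ω
        = f₀ * (α + μ + d) * (μ * φ * (α + μ + d)) / (Dωfun ω) ^ 2 := by
      rw [hfun]
      refine ((hN.div hD hden).deriv).trans ?_
      rw [hnum, ← hDlin]
    have hξ2ω : ξ2fun ω ≠ 0 := by rw [hξ2fun]; positivity
    rw [hder, hR₀ω]
    field_simp
end
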